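/- arXiv:1503.02839 — 2 statements merged into one kernel-verified Lean document; each statement's English description precedes it below -/
import Mathlib

section
/- Let A be a finite set of actions. For each time t ≥ 1 let k_t ∈ A be the played action, γ_t : A → ℝ a threshold function, and Γ_t ∈ ℝ the realized interference. Define actual rewards w_t(a) = 1 if Γ_t ≤ γ_t(a) and 0 otherwise, and estimated rewards w̃_t(a) = 1 if γ_t(a) > γ_t(k_t) or w_t(k_t) = 1, and 0 otherwise. Fix distinct actions k, k̂ ∈ A and define the actual regret R_T = max{0, (1/T) Σ_{t ≤ T, k_t = k} (w_t(k̂) − w_t(k))} and the estimated regret R̃_T = max{0, (1/T) Σ_{t ≤ T, k_t = k} (w̃_t(k̂) − w_t(k))}. Then 0 ≤ R_T ≤ R̃_T for every T ≥ 1, and if R̃_T → 0 as T → ∞ then R_T → 0 as T → ∞. -/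
open Filter

theorem success_le_optimistic_estimate (Γ g₀ g : ℝ) :
    (if Γ ≤ g then (1 : ℝ) else 0) ≤
      if g₀ < g ∨ (if Γ ≤ g₀ then (1 : ℝ) else 0) = 1 then 1 else 0 := by
  by_cases hg : Γ ≤ g
  · have hest : g₀ < g ∨ (if Γ ≤ g₀ then (1 : ℝ) else 0) = 1 := by
      rcases lt_or_ge g₀ Γ with hlt | hle
      · exact Or.inl (hlt.trans_le hg)
      · exact Or.inr (if_pos hle)
    rw [if_pos hg, if_pos hest]
  · rw [if_neg hg]
    split_ifs <;> norm_num

theorem estimated_regret_dominates_and_convergence_general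
    {A : Type*} [DecidableEq A]
    (k : ℕ → A) (γ : ℕ → A → ℝ) (Γ : ℕ → ℝ)
    (w wEst : ℕ → A → ℝ)
    (hw : ∀ t a, w t a = if Γ t ≤ γ t a then 1 else 0)
    (hwEst : ∀ t a, wEst t a = if γ t (k t) < γ t a ∨ w t (k t) = 1 then 1 else 0)
    (a a' : A)
    (R REst : ℕ → ℝ)
    (hR : ∀ T, R T = max 0 ((1 / (T : ℝ)) *
      ∑ t ∈ Finset.Icc 1 T, if k t = a then w t a' - w t a else 0))
    (hREst : ∀ T, REst T = max 0 ((1 / (T : ℝ)) *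
      ∑ t ∈ Finset.Icc 1 T, if k t = a then wEst t a' - w t a else 0)) :
    (∀ T, 1 ≤ T → 0 ≤ R T ∧ R T ≤ REst T) ∧
      (Tendsto REst atTop (nhds 0) → Tendsto R atTop (nhds 0)) := by
  have hw_le : ∀ t, w t a' ≤ wEst t a' := fun t => by
    rw [hw, hwEst, hw t (k t)]
    exact success_le_optimistic_estimate _ _ _
  have hR_le : ∀ T, R T ≤ REst T := fun T => by
    rw [hR, hREst]
    gcongr with t
    split_ifs
    · linarith [hw_le t]
    · rfl
  have hR_nonneg : ∀ T, 0 ≤ R T := fun T => hR T ▸ le_max_left _ _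
  exact ⟨fun T _ => ⟨hR_nonneg T, hR_le T⟩, fun h => squeeze_zero hR_nonneg hR_le h⟩

theorem estimated_regret_dominates_and_convergence
    {A : Type*} [Fintype A] [DecidableEq A]
    (k : ℕ → A) (γ : ℕ → A → ℝ) (Γ : ℕ → ℝ)
    (w wEst : ℕ → A → ℝ)
    (hw : ∀ t a, w t a = if Γ t ≤ γ t a then 1 else 0)
    (hwEst : ∀ t a, wEst t a = if γ t (k t) < γ t a ∨ w t (k t) = 1 then 1 else 0)
    (a a' : A) (hne : a ≠ a')
    (R REst : ℕ → ℝ)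
    (hR : ∀ T, R T = max 0 ((1 / (T : ℝ)) *
      ∑ t ∈ Finset.Icc 1 T, if k t = a then w t a' - w t a else 0))
    (hREst : ∀ T, REst T = max 0 ((1 / (T : ℝ)) *
      ∑ t ∈ Finset.Icc 1 T, if k t = a then wEst t a' - w t a else 0)) :
    (∀ T, 1 ≤ T → 0 ≤ R T ∧ R T ≤ REst T) ∧
      (Tendsto REst atTop (nhds 0) → Tendsto R atTop (nhds 0)) :=
  estimated_regret_dominates_and_convergence_general k γ Γ w wEst hw hwEst a a' R REst hR hREst
end

section
/- Consider a finite N-player game: for each player i ∈ {1,…,N} a finite nonempty action set A_i, the profile set A = A_1 × ⋯ × A_N, and utility functions u_i : A → ℝ. Let k_1, k_2, … ∈ A be a sequence of profiles, f_T(b) = |{t ≤ T : k_t = b}|/T the empirical frequency, and R_T(i, a, a') = max{0, (1/T) Σ_{t ≤ T, (k_t)_i = a} (u_i(a', (k_t)_{-i}) − u_i(k_t))} the regret of player i for the pair (a, a'). Fix ε ≥ 0. Then limsup_{T→∞} R_T(i, a, a') ≤ ε for every player i and all a, a' ∈ A_i with a ≠ a', if and only if the empirical frequencies converge to the set of correlated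 ε-equilibria, i.e., inf{ max_{b ∈ A} |f_T(b) − ψ(b)| : ψ a correlated ε-equilibrium } → 0 as T → ∞. -/
/-!
Write `g_{i,a,a'}(b) = [b_i = a] (u_i(a', b_{-i}) - u_i(b))`. The regret `R_T(i, a, a')` is the
positive part of `∑_b f_T(b) g_{i,a,a'}(b)`, and the correlated `ε`-equilibria are the points `ψ`
of the simplex with `∑_b ψ(b) g_{i,a,a'}(b) ≤ ε` for all `(i, a, a')`: a sublevel set `C` of
finitely many continuous functions on a compact set. A sequence in a compact set is asymptotically
in such a sublevel set iff it approaches it: one direction by compactness (every limit point lies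
in `C`), the other by uniform continuity, provided `C` is nonempty.

Nonemptiness of `C` comes from regret matching. For nonnegative weights on the swaps `(i, a, a')`,
the product of stationary distributions of the players' weight matrices makes the weighted
expected gain of the swaps vanish, so some profile makes it nonpositive. Choosing each next profile
in this way for the positive parts of the cumulative regrets keeps the potential `∑ (R⁺)²` below
`B T` (Blackwell approachability of the negative orthant), so average regrets vanish, and any limit
point of the empirical frequencies is a correlated equilibrium.
-/

open Filter

def IsCorrelatedEpsEquilibrium {N : ℕ} {A : Fin N → Type*}
    [∀ i, Fintype (A i)] [∀ i, DecidableEq (A i)]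
    (u : (i : Fin N) → ((∀ j, A j) → ℝ)) (ε : ℝ)
    (ψ : (∀ j, A j) → ℝ) : Prop :=
  (∀ b, 0 ≤ ψ b) ∧ (∑ b : (∀ j, A j), ψ b = 1) ∧
    ∀ (i : Fin N) (a a' : A i),
      ∑ b ∈ Finset.univ.filter (fun b : (∀ j, A j) => b i = a),
        ψ b * (u i (Function.update b i a') - u i b) ≤ ε

open Topology Finset Function Matrix Metric

theorem ContinuousLinearMap.exists_mem_apply_eq_self_of_mapsTo {E : Type*}
    [NormedAddCommGroup E] [NormedSpace ℝ E] (Φ : E →L[ℝ] E) {K : Set E}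
    (hKc : IsCompact K) (hKv : Convex ℝ K) (hK : K.Nonempty) (hΦ : Set.MapsTo Φ K K) :
    ∃ q ∈ K, Φ q = q := by
  obtain ⟨x, hx⟩ := hK
  obtain ⟨C, hC⟩ := hKc.isBounded.exists_norm_le
  -- Cesàro averages of an orbit are almost fixed.
  set v : ℕ → E := fun n => ∑ t ∈ range (n + 1), ((n : ℝ) + 1)⁻¹ • Φ^[t] x
  have hv : ∀ n, v n ∈ K := fun n => hKv.sum_mem (fun _ _ => by positivity)
    (by simp only [sum_const, card_range, nsmul_eq_mul]; push_cast; field_simp)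
    fun t _ => hΦ.iterate t hx
  have hstep : ∀ n, Φ (v n) - v n = ((n : ℝ) + 1)⁻¹ • (Φ^[n + 1] x - x) := by
    intro n
    simp only [v, map_sum, map_smul, ← smul_sum, ← smul_sub]
    congr 1
    rw [sum_range_succ, sum_range_succ']
    simp only [← iterate_succ_apply' Φ]
    abel
  have hdefect : Tendsto (fun n => Φ (v n) - v n) atTop (𝓝 0) := by
    simp only [hstep]
    refine (tendsto_one_div_add_atTop_nhds_zero_nat.congr fun n => one_div _)
      |>.zero_smul_isBoundedUnder_le ⟨C + C, eventually_map.2 (Eventually.of_forall fun n => ?_)⟩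
    exact (norm_sub_le _ _).trans (add_le_add (hC _ (hΦ.iterate _ hx)) (hC _ hx))
  obtain ⟨q, hq, σ, hσ, hlim⟩ := hKc.tendsto_subseq hv
  refine ⟨q, hq, tendsto_nhds_unique ((Φ.continuous.tendsto q).comp hlim) ?_⟩
  simpa [comp_def] using hlim.add (hdefect.comp hσ.tendsto_atTop)

theorem Matrix.exists_mem_stdSimplex_vecMul_eq_self {n : Type*} [Fintype n] [DecidableEq n]
    [Nonempty n] {P : Matrix n n ℝ} (hP : P ∈ rowStochastic ℝ n) :
    ∃ q ∈ stdSimplex ℝ n, q ᵥ* P = q := by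
  refine P.vecMulLinear.toContinuousLinearMap.exists_mem_apply_eq_self_of_mapsTo
    (isCompact_stdSimplex ℝ n) (convex_stdSimplex ℝ n)
    ⟨_, single_mem_stdSimplex ℝ (Classical.arbitrary n)⟩ fun q hq => ?_
  refine ⟨nonneg_vecMul_of_mem_rowStochastic hP hq.1, ?_⟩
  simpa [dotProduct] using
    vecMul_dotProduct_one_eq_one_rowStochastic hP (x := q) (by simpa [dotProduct] using hq.2)

theorem Matrix.exists_mem_stdSimplex_vecMul_eq_mul_mulVec_one {n : Type*} [Fintype n]
    [DecidableEq n] [Nonempty n] {M : Matrix n n ℝ} (hM : ∀ a b, 0 ≤ M a b) :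
    ∃ q ∈ stdSimplex ℝ n, q ᵥ* M = q * M *ᵥ 1 := by
  set s := M *ᵥ 1
  set μ : ℝ := 1 + ∑ c, s c
  have hs : ∀ c, 0 ≤ s c := fun c => sum_nonneg fun b _ => by simpa using hM c b
  have hsμ : ∀ c, s c ≤ μ := fun c => by
    have := single_le_sum (fun b _ => hs b) (mem_univ c); linarith
  have hμ : 0 < μ := by linarith [sum_nonneg fun c (_ : c ∈ univ) => hs c]
  -- Uniformization: `1 + (M - diag s) / μ` is stochastic, with the same stationary vectors.
  have hP : 1 + μ⁻¹ • (M - diagonal s) ∈ rowStochastic ℝ n := by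
    refine ⟨fun a b => ?_, ?_⟩
    · rcases eq_or_ne a b with rfl | hab
      · have : μ⁻¹ * s a ≤ 1 := (inv_mul_le_iff₀ hμ).2 (by simpa using hsμ a)
        simp only [add_apply, one_apply_eq, smul_apply, sub_apply, diagonal_apply_eq, smul_eq_mul,
          mul_sub]
        linarith [mul_nonneg (inv_pos.2 hμ).le (hM a a)]
      · simpa [hab] using mul_nonneg (inv_pos.2 hμ).le (hM a b)
    · ext c
      simp [add_mulVec, smul_mulVec, sub_mulVec, mulVec_diagonal, s]
  obtain ⟨q, hq, hfix⟩ := exists_mem_stdSimplex_vecMul_eq_self hP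
  refine ⟨q, hq, funext fun c => ?_⟩
  rw [vecMul_add, vecMul_one, add_eq_left, vecMul_smul,
    smul_eq_zero_iff_right (inv_ne_zero hμ.ne'), vecMul_sub, sub_eq_zero] at hfix
  rw [hfix, vecMul_diagonal, Pi.mul_apply]

theorem posPart_add_sq_le (r d : ℝ) : (r + d)⁺ ^ 2 ≤ r⁺ ^ 2 + 2 * r⁺ * d + d ^ 2 := by
  rcases le_total (r + d) 0 with h | h
  · rw [posPart_eq_zero.2 h]
    nlinarith [sq_nonneg (r⁺ + d)]
  · rw [posPart_eq_self.2 h]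
    nlinarith [le_posPart r]

section Approachability

variable {β ι : Type*} [Fintype ι]

theorem sum_posPart_cumsum_sq_le {v : ℕ → ι → ℝ} {B : ℝ} (hB : ∀ t, ∑ x, v t x ^ 2 ≤ B)
    (hv : ∀ T, ∑ x, (∑ t ∈ Icc 1 T, v t x)⁺ * v (T + 1) x ≤ 0) (T : ℕ) :
    ∑ x, (∑ t ∈ Icc 1 T, v t x)⁺ ^ 2 ≤ B * T := by
  induction T with
  | zero => simp
  | succ T ih =>
    simp_rw [sum_Icc_succ_top (Nat.le_add_left 1 T)]
    calc ∑ x, (∑ t ∈ Icc 1 T, v t x + v (T + 1) x)⁺ ^ 2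
        ≤ ∑ x, ((∑ t ∈ Icc 1 T, v t x)⁺ ^ 2 + 2 * (∑ t ∈ Icc 1 T, v t x)⁺ * v (T + 1) x
            + v (T + 1) x ^ 2) := sum_le_sum fun x _ => posPart_add_sq_le _ _
      _ = ∑ x, (∑ t ∈ Icc 1 T, v t x)⁺ ^ 2
            + 2 * ∑ x, (∑ t ∈ Icc 1 T, v t x)⁺ * v (T + 1) x + ∑ x, v (T + 1) x ^ 2 := by
          simp only [sum_add_distrib, mul_sum, mul_assoc]
      _ ≤ B * ↑(T + 1) := by push_cast; linarith [hv T, hB (T + 1)]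

theorem exists_seq_sum_posPart_cumsum_mul_nonpos (g : β → ι → ℝ)
    (hg : ∀ w : ι → ℝ, (∀ x, 0 ≤ w x) → ∃ m, ∑ x, w x * g m x ≤ 0) :
    ∃ κ : ℕ → β, ∀ T, ∑ x, (∑ t ∈ Icc 1 T, g (κ t) x)⁺ * g (κ (T + 1)) x ≤ 0 := by
  choose next hnext using fun r : ι → ℝ => hg (fun x => (r x)⁺) fun x => posPart_nonneg _
  -- `S T` is the cumulative payoff after `T` rounds, each round playing `next` of the current one.
  let S : ℕ → ι → ℝ := fun T => Nat.rec 0 (fun _ s => s + g (next s)) T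
  have hS : ∀ T x, S T x = ∑ t ∈ Icc 1 T, g (next (S (t - 1))) x := by
    intro T
    induction T with
    | zero => simp [S]
    | succ T ih =>
      intro x
      rw [sum_Icc_succ_top (Nat.le_add_left 1 T), ← ih x]
      rfl
  exact ⟨fun t => next (S (t - 1)), fun T => by simpa [← hS] using hnext (S T)⟩

theorem exists_seq_forall_eventually_avg_lt [Finite β] (g : β → ι → ℝ)
    (hg : ∀ w : ι → ℝ, (∀ x, 0 ≤ w x) → ∃ m, ∑ x, w x * g m x ≤ 0) :
    ∃ κ : ℕ → β, ∀ x, ∀ y > 0, ∀ᶠ T : ℕ in atTop, (T : ℝ)⁻¹ * ∑ t ∈ Icc 1 T, g (κ t) x < y := by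
  obtain ⟨κ, hκ⟩ := exists_seq_sum_posPart_cumsum_mul_nonpos g hg
  obtain ⟨B, hB⟩ := (Set.finite_range fun m => ∑ x, g m x ^ 2).bddAbove
  have hpot := sum_posPart_cumsum_sq_le (v := fun t => g (κ t)) (fun t : ℕ => hB ⟨κ t, rfl⟩) hκ
  refine ⟨κ, fun x y hy => ?_⟩
  have hlim : Tendsto (fun T : ℕ => √(B / T)) atTop (𝓝 0) := by
    simpa using (tendsto_const_div_atTop_nhds_zero_nat B).sqrt
  filter_upwards [hlim.eventually (gt_mem_nhds hy), eventually_gt_atTop 0] with T hTy hT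
  refine lt_of_le_of_lt ?_ hTy
  set s := ∑ t ∈ Icc 1 T, g (κ t) x
  have hT' : (0 : ℝ) < T := by exact_mod_cast hT
  have hs : s⁺ ^ 2 ≤ B * T := (single_le_sum (f := fun x => (∑ t ∈ Icc 1 T, g (κ t) x)⁺ ^ 2)
    (fun _ _ => sq_nonneg _) (mem_univ x)).trans (hpot T)
  calc (T : ℝ)⁻¹ * s ≤ (T : ℝ)⁻¹ * s⁺ := mul_le_mul_of_nonneg_left (le_posPart s) (by positivity)
    _ ≤ √(B / T) := by
      refine Real.le_sqrt_of_sq_le ((le_div_iff₀ hT').2 ?_)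
      calc ((T : ℝ)⁻¹ * s⁺) ^ 2 * T = s⁺ ^ 2 / T := by field_simp
        _ ≤ B := (div_le_iff₀ hT').2 hs

end Approachability

theorem exists_le_dotProduct_of_mem_stdSimplex {α : Type*} [Fintype α] [Nonempty α]
    {w : α → ℝ} (hw : w ∈ stdSimplex ℝ α) (F : α → ℝ) : ∃ m, F m ≤ w ⬝ᵥ F := by
  obtain ⟨m, -, hm⟩ := exists_min_image univ F univ_nonempty
  refine ⟨m, ?_⟩
  calc F m = ∑ b, w b * F m := by rw [← sum_mul, hw.2, one_mul]
    _ ≤ w ⬝ᵥ F := sum_le_sum fun b _ => mul_le_mul_of_nonneg_left (hm b (mem_univ b)) (hw.1 b)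

section ProductDistribution

variable {ι : Type*} [Fintype ι] [DecidableEq ι] {A : ι → Type*} [∀ i, Fintype (A i)]

theorem prod_mem_stdSimplex {q : ∀ i, A i → ℝ} (hq : ∀ i, q i ∈ stdSimplex ℝ (A i)) :
    (fun m : ∀ i, A i => ∏ i, q i (m i)) ∈ stdSimplex ℝ (∀ i, A i) :=
  ⟨fun m => prod_nonneg fun i _ => (hq i).1 _, by simp [← Fintype.prod_sum, (hq _).2]⟩

theorem sum_prod_mul_ite_eq_mul_sum_update [∀ i, DecidableEq (A i)] (q : ∀ i, A i → ℝ) (i : ι)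
    (hq : ∑ c, q i c = 1) (a : A i) (H : (∀ j, A j) → ℝ) :
    ∑ m, (∏ j, q j (m j)) * (if m i = a then H m else 0) =
      q i a * ∑ m, (∏ j, q j (m j)) * H (update m i a) := by
  set e := Equiv.piSplitAt i A
  have hfst : ∀ x, e.symm x i = x.1 := fun x => congrArg Prod.fst (e.apply_symm_apply x)
  have hsnd : ∀ x (j : {j // j ≠ i}), e.symm x j = x.2 j :=
    fun x j => congrFun (congrArg Prod.snd (e.apply_symm_apply x)) j
  have hupd : ∀ (c : A i) r, update (e.symm (c, r)) i a = e.symm (a, r) := fun c r =>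
    e.injective <| Prod.ext (by simp [e]) (funext fun j => by simp [e, update_of_ne j.2, hsnd])
  have hprod : ∀ m : ∀ j, A j, ∏ j, q j (m j) = q i (m i) * ∏ j : {j // j ≠ i}, q j (m j) :=
    fun m => Fintype.prod_eq_mul_prod_subtype_ne (fun j => q j (m j)) i
  rw [← e.symm.sum_comp, ← e.symm.sum_comp, Fintype.sum_prod_type, Fintype.sum_prod_type]
  simp only [hprod, hupd, hfst, hsnd]
  simp only [mul_ite, mul_zero, sum_ite_irrel, sum_const_zero, sum_ite_eq', mem_univ, if_true]
  simp_rw [mul_assoc, ← mul_sum, ← sum_mul, hq, one_mul]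

end ProductDistribution

theorem sInf_sup'_abs_sub_eq_infDist {α : Type*} [Fintype α] [Nonempty α] (x : α → ℝ)
    (P : (α → ℝ) → Prop) :
    sInf {d | ∃ ψ, P ψ ∧ d = univ.sup' univ_nonempty fun b => |x b - ψ b|} =
      infDist x {ψ | P ψ} := by
  have hdist : ∀ ψ : α → ℝ, (univ.sup' univ_nonempty fun b => |x b - ψ b|) = dist x ψ :=
    fun ψ => le_antisymm (sup'_le _ _ fun b _ => dist_le_pi_dist x ψ b)
      (dist_pi_le_iff'.2 fun b => le_sup' (fun b => |x b - ψ b|) (mem_univ b))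
  simp_rw [hdist, infDist_eq_iInf]
  congr 1
  ext d
  simp [eq_comm]

theorem limsup_max_zero_le_iff {α : Type*} {l : Filter α} [l.NeBot] {g : α → ℝ} {ε : ℝ}
    (hg : IsBoundedUnder (· ≤ ·) l g) (hε : 0 ≤ ε) :
    limsup (fun T => max 0 (g T)) l ≤ ε ↔ ∀ y > ε, ∀ᶠ T in l, g T < y := by
  rw [limsup_le_iff (isCoboundedUnder_le_of_le l fun T => le_max_left 0 (g T))
    (isBoundedUnder_const.sup hg)]
  exact forall₂_congr fun y hy => by simp [hε.trans_lt hy]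

section Sublevel

variable {X α : Type*} [PseudoMetricSpace X] {K : Set X} {ε : ℝ}

theorem IsCompact.isBoundedUnder_le_comp {l : Filter α} {L : X → ℝ} {p : α → X}
    (hK : IsCompact K) (hL : ContinuousOn L K) (hp : ∀ᶠ T in l, p T ∈ K) :
    IsBoundedUnder (· ≤ ·) l fun T => L (p T) := by
  obtain ⟨C, hC⟩ := hK.bddAbove_image hL
  exact isBoundedUnder_of_eventually_le (hp.mono fun T hT => hC ⟨p T, hT, rfl⟩)

theorem le_of_tendsto_subseq_of_forall_eventually_lt {g : ℕ → ℝ} {a : ℝ} {φ : ℕ → ℕ}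
    (hφ : Tendsto φ atTop atTop) (hg : Tendsto (g ∘ φ) atTop (𝓝 a))
    (h : ∀ y > ε, ∀ᶠ T in atTop, g T < y) : a ≤ ε :=
  le_of_forall_gt_imp_ge_of_dense fun y hy =>
    le_of_tendsto hg <| (hφ.eventually (h y hy)).mono fun _ => le_of_lt

theorem tendsto_infDist_of_forall_eventually_lt {ι : Type*} {L : ι → X → ℝ} {p : ℕ → X}
    (hK : IsCompact K) (hL : ∀ x, Continuous (L x)) (hp : ∀ᶠ T in atTop, p T ∈ K)
    (h : ∀ x, ∀ y > ε, ∀ᶠ T in atTop, L x (p T) < y) :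
    Tendsto (fun T => infDist (p T) {q ∈ K | ∀ x, L x q ≤ ε}) atTop (𝓝 0) := by
  set C := {q ∈ K | ∀ x, L x q ≤ ε}
  refine tendsto_order.2 ⟨fun a ha => Eventually.of_forall fun T => ha.trans_le infDist_nonneg,
    fun δ hδ => ?_⟩
  by_contra hfar
  obtain ⟨φ, hφ, hφK⟩ :=
    extraction_of_frequently_atTop ((not_eventually.1 hfar).and_eventually hp)
  obtain ⟨q, hqK, σ, hσ, hlim⟩ := hK.tendsto_subseq fun n => (hφK n).2
  have hqC : q ∈ C := ⟨hqK, fun x => le_of_tendsto_subseq_of_forall_eventually_lt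
    (hφ.comp hσ).tendsto_atTop (((hL x).tendsto q).comp hlim) (h x)⟩
  have hnear := ((continuous_infDist_pt C).tendsto q).comp hlim
  rw [infDist_zero_of_mem hqC] at hnear
  obtain ⟨n, hn⟩ := (hnear.eventually (gt_mem_nhds hδ)).exists
  exact (hφK (σ n)).1 hn

theorem eventually_lt_of_tendsto_infDist {l : Filter α} {S : Set X} {L : X → ℝ} {p : α → X}
    (hK : IsCompact K) (hL : ContinuousOn L K) (hSK : S ⊆ K) (hS : S.Nonempty)
    (hLS : ∀ q ∈ S, L q ≤ ε) (hp : ∀ᶠ T in l, p T ∈ K)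
    (h : Tendsto (fun T => infDist (p T) S) l (𝓝 0)) : ∀ y > ε, ∀ᶠ T in l, L (p T) < y := by
  intro y hy
  obtain ⟨δ, hδ, hLδ⟩ := uniformContinuousOn_iff.1 (hK.uniformContinuousOn_of_continuous hL)
    (y - ε) (sub_pos.2 hy)
  filter_upwards [h.eventually (gt_mem_nhds hδ), hp] with T hT hTK
  obtain ⟨q, hq, hdist⟩ := (infDist_lt_iff hS).1 hT
  have := hLδ _ hTK q (hSK hq) hdist
  rw [Real.dist_eq, abs_lt] at this
  linarith [hLS q hq]

end Sublevel

section Empirical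

variable {α : Type*} [Fintype α] [DecidableEq α]

noncomputable def empiricalFreq (k : ℕ → α) (T : ℕ) (b : α) : ℝ :=
  #{t ∈ Icc 1 T | k t = b} / T

theorem empiricalFreq_dotProduct (k : ℕ → α) (T : ℕ) (g : α → ℝ) :
    empiricalFreq k T ⬝ᵥ g = (T : ℝ)⁻¹ * ∑ t ∈ Icc 1 T, g (k t) := by
  simp only [dotProduct, empiricalFreq, div_eq_inv_mul, mul_assoc, ← mul_sum]
  rw [← sum_fiberwise' (Icc 1 T) k g]
  simp [sum_const, nsmul_eq_mul]

theorem empiricalFreq_mem_stdSimplex (k : ℕ → α) {T : ℕ} (hT : T ≠ 0) :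
    empiricalFreq k T ∈ stdSimplex ℝ α := by
  refine ⟨fun b => by unfold empiricalFreq; positivity, ?_⟩
  have := empiricalFreq_dotProduct k T 1
  simp_all [dotProduct]

end Empirical

section Game

variable {N : ℕ} {A : Fin N → Type*} [∀ i, DecidableEq (A i)]

def swapGain (u : (i : Fin N) → ((∀ j, A j) → ℝ)) (i : Fin N) (a a' : A i) (b : ∀ j, A j) : ℝ :=
  if b i = a then u i (update b i a') - u i b else 0

variable (u : (i : Fin N) → ((∀ j, A j) → ℝ))

theorem swapGain_self (i : Fin N) (a : A i) : swapGain u i a a = 0 := by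
  ext b
  rw [swapGain]
  split_ifs with h
  · rw [← h, update_eq_self, sub_self, Pi.zero_apply]
  · rfl

variable [∀ i, Fintype (A i)]

theorem isCorrelatedEpsEquilibrium_iff {ε : ℝ} {ψ : (∀ j, A j) → ℝ} :
    IsCorrelatedEpsEquilibrium u ε ψ ↔
      ψ ∈ stdSimplex ℝ (∀ j, A j) ∧ ∀ s : Σ i, A i × A i, ψ ⬝ᵥ swapGain u s.1 s.2.1 s.2.2 ≤ ε := by
  simp only [IsCorrelatedEpsEquilibrium, stdSimplex, dotProduct, swapGain, mul_ite, mul_zero,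
    sum_filter, Sigma.forall, Prod.forall, Set.mem_ofPred_eq, and_assoc]

theorem dotProduct_prod_swapGain {q : ∀ i, A i → ℝ} {i : Fin N} (hq : ∑ c, q i c = 1)
    (a a' : A i) :
    (fun m => ∏ j, q j (m j)) ⬝ᵥ swapGain u i a a' =
      q i a * (∑ m, (∏ j, q j (m j)) * u i (update m i a') -
        ∑ m, (∏ j, q j (m j)) * u i (update m i a)) := by
  have := sum_prod_mul_ite_eq_mul_sum_update q i hq a fun m => u i (update m i a') - u i m
  simp only [update_idem] at this
  rw [dotProduct, ← sum_sub_distrib]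
  simp_rw [← mul_sub]
  exact this

theorem exists_sum_mul_swapGain_nonpos [∀ i, Nonempty (A i)] (w : (Σ i, A i × A i) → ℝ)
    (hw : ∀ s, 0 ≤ w s) : ∃ m, ∑ s, w s * swapGain u s.1 s.2.1 s.2.2 m ≤ 0 := by
  choose q hq hbalance using fun i => exists_mem_stdSimplex_vecMul_eq_mul_mulVec_one
    (M := fun a a' => w ⟨i, a, a'⟩) fun _ _ => hw _
  set U : ∀ i, A i → ℝ := fun i c => ∑ m, (∏ j, q j (m j)) * u i (update m i c)
  have hflow : ∀ i, ∑ a, ∑ a', w ⟨i, a, a'⟩ * (q i a * (U i a' - U i a)) = 0 := by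
    intro i
    have := congrArg (· ⬝ᵥ U i) (hbalance i)
    simp only [dotProduct, vecMul, mulVec, Pi.mul_apply, Pi.one_apply, mul_one, sum_mul,
      mul_sum] at this
    rw [sum_comm] at this
    simp_rw [mul_sub, sum_sub_distrib, sub_eq_zero]
    convert this using 3 <;> ring
  obtain ⟨m, hm⟩ := exists_le_dotProduct_of_mem_stdSimplex (prod_mem_stdSimplex hq)
    fun m => ∑ s, w s * swapGain u s.1 s.2.1 s.2.2 m
  refine ⟨m, hm.trans_eq ?_⟩
  calc _ = ∑ s, w s * ((fun m => ∏ j, q j (m j)) ⬝ᵥ swapGain u s.1 s.2.1 s.2.2) := by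
          simp only [dotProduct, mul_sum]
          rw [sum_comm]
          exact sum_congr rfl fun _ _ => sum_congr rfl fun _ _ => by ring
    _ = ∑ i, ∑ a, ∑ a', w ⟨i, a, a'⟩ * (q i a * (U i a' - U i a)) := by
          rw [Fintype.sum_sigma]
          simp_rw [Fintype.sum_prod_type, dotProduct_prod_swapGain u (hq _).2]
          rfl
    _ = 0 := by simp [hflow]

theorem exists_isCorrelatedEpsEquilibrium [∀ i, Nonempty (A i)] {ε : ℝ} (hε : 0 ≤ ε) :
    ∃ ψ, IsCorrelatedEpsEquilibrium u ε ψ := by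
  obtain ⟨κ, hκ⟩ := exists_seq_forall_eventually_avg_lt
    (fun m (s : Σ i, A i × A i) => swapGain u s.1 s.2.1 s.2.2 m) (exists_sum_mul_swapGain_nonpos u)
  obtain ⟨ψ, hψ, σ, hσ, hlim⟩ := (isCompact_stdSimplex ℝ _).tendsto_subseq
    fun n => empiricalFreq_mem_stdSimplex κ n.succ_ne_zero
  refine ⟨ψ, (isCorrelatedEpsEquilibrium_iff u).2 ⟨hψ, fun s => ?_⟩⟩
  refine le_of_tendsto_subseq_of_forall_eventually_lt (g := fun T => empiricalFreq κ T ⬝ᵥ _)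
    ((tendsto_add_atTop_nat 1).comp hσ.tendsto_atTop)
    (((continuous_id.dotProduct continuous_const).tendsto ψ).comp hlim) fun y hy => ?_
  simpa [empiricalFreq_dotProduct] using hκ s y (hε.trans_lt hy)

theorem forall_limsup_max_zero_le_iff {ε : ℝ} (hε : 0 ≤ ε) {p : ℕ → (∀ j, A j) → ℝ}
    (hp : ∀ᶠ T in atTop, p T ∈ stdSimplex ℝ (∀ j, A j)) :
    (∀ (i : Fin N) (a a' : A i), a ≠ a' →
        limsup (fun T => max 0 (p T ⬝ᵥ swapGain u i a a')) atTop ≤ ε) ↔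
      ∀ s : Σ i, A i × A i, ∀ y > ε, ∀ᶠ T in atTop, p T ⬝ᵥ swapGain u s.1 s.2.1 s.2.2 < y := by
  simp only [Sigma.forall, Prod.forall]
  refine forall₃_congr fun i a a' => ?_
  have hbdd : IsBoundedUnder (· ≤ ·) atTop fun T => p T ⬝ᵥ swapGain u i a a' :=
    (isCompact_stdSimplex ℝ _).isBoundedUnder_le_comp (L := (· ⬝ᵥ swapGain u i a a'))
      (continuous_id.dotProduct continuous_const).continuousOn hp
  rw [limsup_max_zero_le_iff hbdd hε]
  rcases eq_or_ne a a' with rfl | h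
  · simp +contextual [swapGain_self, hε.trans_lt]
  · simp [h]

end Game

theorem empirical_frequencies_converge_to_correlated_eps_equilibria_iff
    {N : ℕ} (A : Fin N → Type*) [∀ i, Fintype (A i)] [∀ i, DecidableEq (A i)]
    [∀ i, Nonempty (A i)]
    (u : (i : Fin N) → ((∀ j, A j) → ℝ))
    (k : ℕ → (∀ j, A j))
    (f : ℕ → (∀ j, A j) → ℝ)
    (hf : ∀ T b, f T b =
      ((Finset.Icc 1 T).filter (fun t => k t = b)).card / (T : ℝ))
    (R : ℕ → (i : Fin N) → A i → A i → ℝ)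
    (hR : ∀ T i a a', R T i a a' = max 0 ((1 / (T : ℝ)) *
      ∑ t ∈ Finset.Icc 1 T,
        (if k t i = a then u i (Function.update (k t) i a') - u i (k t) else 0)))
    (ε : ℝ) (hε : 0 ≤ ε) :
    (∀ (i : Fin N) (a a' : A i), a ≠ a' →
        limsup (fun T => R T i a a') atTop ≤ ε) ↔
      Tendsto (fun T => sInf {d : ℝ | ∃ ψ : (∀ j, A j) → ℝ,
          IsCorrelatedEpsEquilibrium u ε ψ ∧
          d = Finset.univ.sup' Finset.univ_nonempty
                (fun b : (∀ j, A j) => |f T b - ψ b|)})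
        atTop (nhds 0) := by
  obtain rfl : f = empiricalFreq k := funext₂ hf
  obtain rfl : R = fun T i a a' => max 0 (empiricalFreq k T ⬝ᵥ swapGain u i a a') := by
    ext T i a a'
    rw [hR, empiricalFreq_dotProduct, one_div]
    rfl
  have hK : ∀ᶠ T in atTop, empiricalFreq k T ∈ stdSimplex ℝ (∀ j, A j) :=
    (eventually_ne_atTop 0).mono fun T => empiricalFreq_mem_stdSimplex k
  have hL (s : Σ i, A i × A i) :
      Continuous fun ψ : (∀ j, A j) → ℝ => ψ ⬝ᵥ swapGain u s.1 s.2.1 s.2.2 :=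
    continuous_id.dotProduct continuous_const
  have hC : {ψ | IsCorrelatedEpsEquilibrium u ε ψ} =
      {ψ ∈ stdSimplex ℝ _ | ∀ s : Σ i, A i × A i, ψ ⬝ᵥ swapGain u s.1 s.2.1 s.2.2 ≤ ε} :=
    Set.ext fun ψ => isCorrelatedEpsEquilibrium_iff u
  obtain ⟨ψ₀, hψ₀⟩ := exists_isCorrelatedEpsEquilibrium u hε
  simp only [sInf_sup'_abs_sub_eq_infDist, hC]
  rw [forall_limsup_max_zero_le_iff u hε hK]
  refine ⟨tendsto_infDist_of_forall_eventually_lt (isCompact_stdSimplex ℝ _) hL hK, fun h s => ?_⟩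
  exact eventually_lt_of_tendsto_infDist (L := fun ψ => ψ ⬝ᵥ swapGain u s.1 s.2.1 s.2.2)
    (isCompact_stdSimplex ℝ _) (hL s).continuousOn
    (fun _ hq => hq.1) (hC ▸ ⟨ψ₀, hψ₀⟩) (fun _ hq => hq.2 s) hK h
end
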